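/- arXiv:2604.20933 — 2 statements merged into one kernel-verified Lean document; each statement's English description precedes it below -/
import Mathlib

section
/- (Fixed Point, Proposition 1.) Let p and q be densities on a σ-finite measure space (Ω, 𝒜, μ), both positive μ-a.e., and let α > 0 with α ≠ 1. For every density g positive μ-a.e. such that the integrals defining L(g; α) are finite and positive, the IRIS objective satisfies L(g; α) ≥ −(1/α) · D_α(p‖q), with equality when g = p μ-a.e. In particular the global minimum of L(·; α) over densities is attained at g = p. -/
open MeasureTheory Filter Topology


lemma holder_aux {Ω : Type*} [MeasurableSpace Ω] {μ : Measure Ω} {f g : Ω → ℝ} {θ : ℝ}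
    (hθ0 : 0 < θ) (hθ1 : θ < 1)
    (hf : Integrable f μ) (hg : Integrable g μ)
    (hfg : Integrable (fun x => f x ^ θ * g x ^ (1-θ)) μ)
    (hf0 : ∀ᵐ x ∂μ, 0 ≤ f x) (hg0 : ∀ᵐ x ∂μ, 0 ≤ g x)
    (hF : 0 < ∫ x, f x ∂μ) (hG : 0 < ∫ x, g x ∂μ) :
    ∫ x, f x ^ θ * g x ^ (1-θ) ∂μ ≤ (∫ x, f x ∂μ)^θ * (∫ x, g x ∂μ)^(1-θ) := by
  set F := ∫ x, f x ∂μ with hFdef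
  set G := ∫ x, g x ∂μ with hGdef
  have hrhs : Integrable (fun x => F^(θ-1)*G^(1-θ)*θ * f x + F^θ*G^(-θ)*(1-θ) * g x) μ :=
    ((hf.const_mul _).add (hg.const_mul _))
  have hmono : ∀ᵐ x ∂μ, f x ^ θ * g x ^ (1-θ)
      ≤ F^(θ-1)*G^(1-θ)*θ * f x + F^θ*G^(-θ)*(1-θ) * g x := by
    filter_upwards [hf0, hg0] with x hfx hgx
    have h1 : (f x / F) ^ θ * (g x / G) ^ (1-θ) ≤ θ * (f x / F) + (1-θ) * (g x / G) :=
      Real.geom_mean_le_arith_mean2_weighted (le_of_lt hθ0) (by linarith)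
        (div_nonneg hfx hF.le) (div_nonneg hgx hG.le) (by ring)
    have h2 : (f x / F) ^ θ = f x ^ θ / F ^ θ := Real.div_rpow hfx hF.le θ
    have h3 : (g x / G) ^ (1-θ) = g x ^ (1-θ) / G ^ (1-θ) := Real.div_rpow hgx hG.le (1-θ)
    have hFθ : (0:ℝ) < F ^ θ := Real.rpow_pos_of_pos hF _
    have hGθ : (0:ℝ) < G ^ (1-θ) := Real.rpow_pos_of_pos hG _
    rw [h2, h3] at h1
    have h4 := mul_le_mul_of_nonneg_left h1 (le_of_lt (mul_pos hFθ hGθ))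
    calc f x ^ θ * g x ^ (1-θ)
        = F ^ θ * G ^ (1-θ) * (f x ^ θ / F ^ θ * (g x ^ (1-θ) / G ^ (1-θ))) := by
          field_simp
      _ ≤ F ^ θ * G ^ (1-θ) * (θ * (f x / F) + (1-θ) * (g x / G)) := h4
      _ = F^(θ-1)*G^(1-θ)*θ * f x + F^θ*G^(-θ)*(1-θ) * g x := by
          have e1 : F ^ (θ-1) = F ^ θ / F := by
            rw [Real.rpow_sub hF, Real.rpow_one]
          have e2 : G ^ (-θ) = G ^ (1-θ) / G := by
            rw [show -θ = (1-θ) - 1 by ring, Real.rpow_sub hG, Real.rpow_one]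
          rw [e1, e2]; field_simp
  calc ∫ x, f x ^ θ * g x ^ (1-θ) ∂μ
      ≤ ∫ x, F^(θ-1)*G^(1-θ)*θ * f x + F^θ*G^(-θ)*(1-θ) * g x ∂μ :=
        integral_mono_ae hfg hrhs hmono
    _ = F^(θ-1)*G^(1-θ)*θ * F + F^θ*G^(-θ)*(1-θ) * G := by
        rw [integral_add (hf.const_mul _) (hg.const_mul _), integral_const_mul,
          integral_const_mul]
    _ = F ^ θ * G ^ (1-θ) := by
        have e1 : F ^ (θ-1) * F = F ^ θ := by
          rw [Real.rpow_sub hF, Real.rpow_one]; field_simp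
        have e2 : G ^ (-θ) * G = G ^ (1-θ) := by
          rw [show -θ = (1-θ) - 1 by ring, Real.rpow_sub hG, Real.rpow_one]; field_simp
        calc F^(θ-1)*G^(1-θ)*θ * F + F^θ*G^(-θ)*(1-θ) * G
            = (F^(θ-1)*F)*G^(1-θ)*θ + F^θ*(G^(-θ)*G)*(1-θ) := by ring
          _ = F ^ θ * G ^ (1-θ) := by rw [e1, e2]; ring

-- write positive reals in exp form
lemma pos_rpow_exp {P : ℝ} (hP : 0 < P) (y : ℝ) : P ^ y = Real.exp (y * Real.log P) := by
  rw [Real.rpow_def_of_pos hP, mul_comm]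

lemma pt1 {P Q G α : ℝ} (hP : 0 < P) (hQ : 0 < Q) (hG : 0 < G) :
    (P * Real.exp ((α-1) * Real.log (G/Q))) ^ α * (Q * Real.exp (α * Real.log (G/Q))) ^ (1-α)
      = P ^ α * Q ^ (1-α) := by
  have h1 : (0:ℝ) < P * Real.exp ((α-1) * Real.log (G/Q)) := mul_pos hP (Real.exp_pos _)
  have h2 : (0:ℝ) < Q * Real.exp (α * Real.log (G/Q)) := mul_pos hQ (Real.exp_pos _)
  rw [pos_rpow_exp h1, pos_rpow_exp h2, pos_rpow_exp hP, pos_rpow_exp hQ,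
    Real.log_mul hP.ne' (Real.exp_pos _).ne', Real.log_mul hQ.ne' (Real.exp_pos _).ne',
    Real.log_exp, Real.log_exp]
  simp only [← Real.exp_add]
  congr 1
  ring

lemma pt2 {P Q G α : ℝ} (hP : 0 < P) (hQ : 0 < Q) (hG : 0 < G) (hα : α ≠ 0) :
    (P ^ α * Q ^ (1-α)) ^ (1/α) * (Q * Real.exp (α * Real.log (G/Q))) ^ (1-1/α)
      = P * Real.exp ((α-1) * Real.log (G/Q)) := by
  have h1 : (0:ℝ) < P ^ α * Q ^ (1-α) :=
    mul_pos (Real.rpow_pos_of_pos hP _) (Real.rpow_pos_of_pos hQ _)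
  have h2 : (0:ℝ) < Q * Real.exp (α * Real.log (G/Q)) := mul_pos hQ (Real.exp_pos _)
  rw [pos_rpow_exp h1, pos_rpow_exp h2,
    Real.log_mul (Real.rpow_pos_of_pos hP α).ne' (Real.rpow_pos_of_pos hQ _).ne',
    Real.log_mul hQ.ne' (Real.exp_pos _).ne', Real.log_exp,
    Real.log_rpow hP, Real.log_rpow hQ, ← Real.exp_add]
  have : P * Real.exp ((α-1) * Real.log (G/Q))
      = Real.exp (Real.log P + (α-1) * Real.log (G/Q)) := by
    rw [Real.exp_add, Real.exp_log hP]
  rw [this]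
  congr 1
  field_simp
  ring

lemma pt3 {P Q α : ℝ} (hP : 0 < P) (hQ : 0 < Q) :
    P * Real.exp ((α-1) * Real.log (P/Q)) = P ^ α * Q ^ (1-α) := by
  rw [pos_rpow_exp hP, pos_rpow_exp hQ, ← Real.exp_add,
    show P * Real.exp ((α-1) * Real.log (P/Q)) = Real.exp (Real.log P + (α-1) * Real.log (P/Q))
      by rw [Real.exp_add, Real.exp_log hP],
    Real.log_div hP.ne' hQ.ne']
  congr 1
  ring

lemma pt4 {P Q α : ℝ} (hP : 0 < P) (hQ : 0 < Q) :
    Q * Real.exp (α * Real.log (P/Q)) = P ^ α * Q ^ (1-α) := by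
  rw [pos_rpow_exp hP, pos_rpow_exp hQ, ← Real.exp_add,
    show Q * Real.exp (α * Real.log (P/Q)) = Real.exp (Real.log Q + α * Real.log (P/Q))
      by rw [Real.exp_add, Real.exp_log hQ],
    Real.log_div hP.ne' hQ.ne']
  congr 1
  ring

theorem stmt_3 {Ω : Type*} [MeasurableSpace Ω] (μ : Measure Ω) [SigmaFinite μ]
    (p q : Ω → ℝ) (α : ℝ)
    (hpm : Measurable p) (hqm : Measurable q)
    (hppos : ∀ᵐ x ∂μ, 0 < p x) (hqpos : ∀ᵐ x ∂μ, 0 < q x)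
    (hpi : Integrable p μ) (hqi : Integrable q μ)
    (hp1 : ∫ x, p x ∂μ = 1) (hq1 : ∫ x, q x ∂μ = 1)
    (hα : 0 < α) (hα1 : α ≠ 1)
    (hM : Integrable (fun x => p x ^ α * q x ^ (1 - α)) μ)
    (hMpos : 0 < ∫ x, p x ^ α * q x ^ (1 - α) ∂μ) :
    (∀ g : Ω → ℝ, Measurable g → (∀ᵐ x ∂μ, 0 < g x) → Integrable g μ →
        (∫ x, g x ∂μ = 1) →
        Integrable (fun x => p x * Real.exp ((α - 1) * Real.log (g x / q x))) μ →
        Integrable (fun x => q x * Real.exp (α * Real.log (g x / q x))) μ →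
        0 < ∫ x, p x * Real.exp ((α - 1) * Real.log (g x / q x)) ∂μ →
        0 < ∫ x, q x * Real.exp (α * Real.log (g x / q x)) ∂μ →
        -(α - 1)⁻¹ * Real.log (∫ x, p x * Real.exp ((α - 1) * Real.log (g x / q x)) ∂μ)
          + α⁻¹ * Real.log (∫ x, q x * Real.exp (α * Real.log (g x / q x)) ∂μ)
        ≥ -α⁻¹ * ((α - 1)⁻¹ * Real.log (∫ x, p x ^ α * q x ^ (1 - α) ∂μ)))
    ∧ (-(α - 1)⁻¹ * Real.log (∫ x, p x * Real.exp ((α - 1) * Real.log (p x / q x)) ∂μ)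
          + α⁻¹ * Real.log (∫ x, q x * Real.exp (α * Real.log (p x / q x)) ∂μ)
        = -α⁻¹ * ((α - 1)⁻¹ * Real.log (∫ x, p x ^ α * q x ^ (1 - α) ∂μ))) := by
  have hα0 : α ≠ 0 := hα.ne'
  have hα1' : α - 1 ≠ 0 := sub_ne_zero.mpr hα1
  constructor
  · intro g hgm hgpos hgi hg1 hA hB hApos hBpos
    set A := ∫ x, p x * Real.exp ((α - 1) * Real.log (g x / q x)) ∂μ with hAdef
    set B := ∫ x, q x * Real.exp (α * Real.log (g x / q x)) ∂μ with hBdef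
    set M := ∫ x, p x ^ α * q x ^ (1 - α) ∂μ with hMdef
    set a := Real.log A
    set b := Real.log B
    set m := Real.log M
    have key : (0:ℝ) ≤ (m - (α * a + (1-α) * b)) * (α*(α-1))⁻¹ := by
      rcases lt_or_gt_of_ne hα1 with hlt | hgt
      · -- α < 1 : Hölder directly
        have hae : (fun x => (p x * Real.exp ((α - 1) * Real.log (g x / q x))) ^ α
              * (q x * Real.exp (α * Real.log (g x / q x))) ^ (1-α))
            =ᵐ[μ] fun x => p x ^ α * q x ^ (1 - α) := by
          filter_upwards [hppos, hqpos, hgpos] with x hp hq hg using pt1 hp hq hg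
        have hfg : Integrable (fun x => (p x * Real.exp ((α - 1) * Real.log (g x / q x))) ^ α
              * (q x * Real.exp (α * Real.log (g x / q x))) ^ (1-α)) μ := hM.congr hae.symm
        have hf0 : ∀ᵐ x ∂μ, 0 ≤ p x * Real.exp ((α - 1) * Real.log (g x / q x)) := by
          filter_upwards [hppos] with x hp using (mul_pos hp (Real.exp_pos _)).le
        have hg0 : ∀ᵐ x ∂μ, 0 ≤ q x * Real.exp (α * Real.log (g x / q x)) := by
          filter_upwards [hqpos] with x hq using (mul_pos hq (Real.exp_pos _)).le
        have hh := holder_aux hα hlt hA hB hfg hf0 hg0 hApos hBpos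
        have hMeq : ∫ x, (p x * Real.exp ((α - 1) * Real.log (g x / q x))) ^ α
              * (q x * Real.exp (α * Real.log (g x / q x))) ^ (1-α) ∂μ = M :=
          integral_congr_ae hae
        rw [hMeq] at hh
        have hlog : m ≤ α * a + (1-α) * b := by
          have := Real.log_le_log hMpos hh
          rwa [Real.log_mul (Real.rpow_pos_of_pos hApos _).ne'
            (Real.rpow_pos_of_pos hBpos _).ne', Real.log_rpow hApos,
            Real.log_rpow hBpos] at this
        have hneg : (α*(α-1))⁻¹ ≤ 0 :=
          inv_nonpos.mpr (mul_nonpos_of_nonneg_of_nonpos hα.le (by linarith))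
        have hms : m - (α * a + (1-α) * b) ≤ 0 := by linarith
        nlinarith [mul_nonneg (neg_nonneg.mpr hms) (neg_nonneg.mpr hneg)]
      · -- α > 1 : Hölder on A
        have hθ0 : (0:ℝ) < 1/α := by positivity
        have hθ1 : 1/α < 1 := by rw [div_lt_one hα]; linarith
        have hae : (fun x => (p x ^ α * q x ^ (1-α)) ^ (1/α)
              * (q x * Real.exp (α * Real.log (g x / q x))) ^ (1-1/α))
            =ᵐ[μ] fun x => p x * Real.exp ((α - 1) * Real.log (g x / q x)) := by
          filter_upwards [hppos, hqpos, hgpos] with x hp hq hg using pt2 hp hq hg hα0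
        have hfg : Integrable (fun x => (p x ^ α * q x ^ (1-α)) ^ (1/α)
              * (q x * Real.exp (α * Real.log (g x / q x))) ^ (1-1/α)) μ := hA.congr hae.symm
        have hf0 : ∀ᵐ x ∂μ, 0 ≤ p x ^ α * q x ^ (1-α) := by
          filter_upwards [hppos, hqpos] with x hp hq using
            (mul_pos (Real.rpow_pos_of_pos hp _) (Real.rpow_pos_of_pos hq _)).le
        have hg0 : ∀ᵐ x ∂μ, 0 ≤ q x * Real.exp (α * Real.log (g x / q x)) := by
          filter_upwards [hqpos] with x hq using (mul_pos hq (Real.exp_pos _)).le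
        have hh := holder_aux hθ0 hθ1 hM hB hfg hf0 hg0 hMpos hBpos
        have hAeq : ∫ x, (p x ^ α * q x ^ (1-α)) ^ (1/α)
              * (q x * Real.exp (α * Real.log (g x / q x))) ^ (1-1/α) ∂μ = A :=
          integral_congr_ae hae
        rw [hAeq] at hh
        have hlog : a ≤ (1/α) * m + (1-1/α) * b := by
          have := Real.log_le_log hApos hh
          rwa [Real.log_mul (Real.rpow_pos_of_pos hMpos _).ne'
            (Real.rpow_pos_of_pos hBpos _).ne', Real.log_rpow hMpos,
            Real.log_rpow hBpos] at this
        have h5 : α * a ≤ m + (α-1) * b := by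
          have h6 := mul_le_mul_of_nonneg_left hlog hα.le
          have e : α * ((1/α) * m + (1-1/α) * b) = m + (α-1) * b := by
            field_simp
          linarith [e ▸ h6]
        have hpos2 : (0:ℝ) ≤ (α*(α-1))⁻¹ :=
          inv_nonneg.mpr (mul_nonneg hα.le (by linarith))
        exact mul_nonneg (by linarith) hpos2
    have id1 : -(α - 1)⁻¹ * a + α⁻¹ * b - (-α⁻¹ * ((α - 1)⁻¹ * m))
        = (m - (α * a + (1-α) * b)) * (α*(α-1))⁻¹ := by
      field_simp
      ring
    linarith [id1 ▸ key]
  · have e1 : ∫ x, p x * Real.exp ((α - 1) * Real.log (p x / q x)) ∂μ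
        = ∫ x, p x ^ α * q x ^ (1 - α) ∂μ := by
      apply integral_congr_ae
      filter_upwards [hppos, hqpos] with x hp hq using pt3 hp hq
    have e2 : ∫ x, q x * Real.exp (α * Real.log (p x / q x)) ∂μ
        = ∫ x, p x ^ α * q x ^ (1 - α) ∂μ := by
      apply integral_congr_ae
      filter_upwards [hppos, hqpos] with x hp hq using pt4 hp hq
    rw [e1, e2]
    field_simp
    ring
end

section
/- (Gradient Structure, Proposition 2, finite case.) Let Y be a nonempty finite set, let p and q be probability mass functions on Y with q(y) > 0 for all y, and let g : ℝ^d × Y → ℝ be such that g(θ, y) > 0 for all θ, y and θ ↦ g(θ, y) is differentiable for each y. Define the reward r(θ, y) = log g(θ, y) − log q(y), and for α > 0, α ≠ 1, define L(θ) = −(1/(α−1)) log Σ_y p(y) e^{(α−1) r(θ,y)} + (1/α) log Σ_y q(y) e^{α r(θ,y)}. Then the gradient of L at θ equals −Σ_y p(y) w⁺(y) ∇_θ log g(θ, y) + Σ_y q(y) w⁻(y) ∇_θ log g(θ, y), where w⁺(y) = e^{(α−1) r(θ,y)} / Σ_{y'} p(y') e^{(α−1) r(θ,y')} and w⁻(y)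 = e^{α r(θ,y)} / Σ_{y'} q(y') e^{α r(θ,y')}. -/
/-!
Each half of the objective has the form `β⁻¹ log ∑ c y exp (β r y)`, whose derivative is the
average of `∇ r y` under the tilted weights `c y exp (β r y) / ∑ c y' exp (β r y')`; and
`∇ r y = ∇ log g y` because `log q y` does not depend on `θ`.
-/

open Real

theorem Finset.sum_mul_exp_pos {ι : Type*} [Fintype ι] {c a : ι → ℝ} (hc : ∀ i, 0 ≤ c i)
    (hc1 : 0 < ∑ i, c i) : 0 < ∑ i, c i * exp (a i) := by
  obtain ⟨i, -, hi⟩ := Finset.exists_lt_of_sum_lt (by simpa using hc1 : ∑ i, (0 : ℝ) < ∑ i, c i)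
  exact Finset.sum_pos' (fun j _ => mul_nonneg (hc j) (exp_pos _).le)
    ⟨i, Finset.mem_univ _, mul_pos hi (exp_pos _)⟩

theorem HasFDerivAt.inv_mul_log_sum_mul_exp {ι E : Type*} [Fintype ι] [NormedAddCommGroup E]
    [NormedSpace ℝ E] {f : ι → E → ℝ} {f' : ι → E →L[ℝ] ℝ} {x : E} (c : ι → ℝ) {β : ℝ}
    (hβ : β ≠ 0) (hS : ∑ i, c i * Real.exp (β * f i x) ≠ 0) (hf : ∀ i, HasFDerivAt (f i) (f' i) x) :
    HasFDerivAt (fun x => β⁻¹ * Real.log (∑ i, c i * Real.exp (β * f i x)))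
      (∑ i, (c i * Real.exp (β * f i x) / ∑ j, c j * Real.exp (β * f j x)) • f' i) x := by
  have hsum : HasFDerivAt (fun x => ∑ i, c i * Real.exp (β * f i x))
      (∑ i, (c i * Real.exp (β * f i x) * β) • f' i) x :=
    HasFDerivAt.fun_sum fun i _ => (((hf i).const_mul β).exp.const_mul (c i)).congr_fderiv
      (by rw [smul_smul, smul_smul])
  refine ((hsum.log hS).const_mul β⁻¹).congr_fderiv ?_
  rw [Finset.smul_sum, Finset.smul_sum]
  refine Finset.sum_congr rfl fun i _ => ?_
  rw [smul_smul, smul_smul]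
  field_simp

theorem stmt_12_general {Y : Type*} [Fintype Y] (d : ℕ)
    (p q : Y → ℝ) (hp0 : ∀ y, 0 ≤ p y) (hp1 : ∑ y, p y = 1)
    (hq0 : ∀ y, 0 < q y) (hq1 : ∑ y, q y = 1)
    (g : EuclideanSpace ℝ (Fin d) → Y → ℝ)
    (hgpos : ∀ θ y, 0 < g θ y)
    (hgdiff : ∀ y, Differentiable ℝ (fun θ => g θ y))
    (α : ℝ) (hα : 0 < α) (hα1 : α ≠ 1)
    (θ : EuclideanSpace ℝ (Fin d)) :
    gradient
      (fun θ' =>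
        -(α - 1)⁻¹ * Real.log (∑ y, p y * Real.exp ((α - 1) * (Real.log (g θ' y) - Real.log (q y))))
          + α⁻¹ * Real.log (∑ y, q y * Real.exp (α * (Real.log (g θ' y) - Real.log (q y))))) θ
    = -(∑ y, (p y * (Real.exp ((α - 1) * (Real.log (g θ y) - Real.log (q y)))
            / ∑ y', p y' * Real.exp ((α - 1) * (Real.log (g θ y') - Real.log (q y'))))) •
          gradient (fun θ' => Real.log (g θ' y)) θ)
      + ∑ y, (q y * (Real.exp (α * (Real.log (g θ y) - Real.log (q y)))
            / ∑ y', q y' * Real.exp (α * (Real.log (g θ y') - Real.log (q y'))))) •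
          gradient (fun θ' => Real.log (g θ' y)) θ := by
  have hreward : ∀ y, HasFDerivAt (fun θ' => log (g θ' y) - log (q y))
      (fderiv ℝ (fun θ' => log (g θ' y)) θ) θ := fun y =>
    (((hgdiff y θ).log (hgpos θ y).ne').hasFDerivAt).sub_const _
  have hplus := HasFDerivAt.inv_mul_log_sum_mul_exp p (sub_ne_zero.2 hα1)
    (Finset.sum_mul_exp_pos hp0 (by rw [hp1]; exact one_pos)).ne' hreward
  have hminus := HasFDerivAt.inv_mul_log_sum_mul_exp q hα.ne'
    (Finset.sum_mul_exp_pos (fun y => (hq0 y).le) (by rw [hq1]; exact one_pos)).ne' hreward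
  refine HasGradientAt.gradient (hasGradientAt_iff_hasFDerivAt.2 ?_)
  simp only [map_add, map_neg, map_sum, map_smul, gradient,
    LinearIsometryEquiv.apply_symm_apply, ← mul_div_assoc]
  simpa only [neg_mul] using hplus.fun_neg.fun_add hminus

theorem stmt_12 {Y : Type*} [Fintype Y] [Nonempty Y] (d : ℕ)
    (p q : Y → ℝ) (hp0 : ∀ y, 0 ≤ p y) (hp1 : ∑ y, p y = 1)
    (hq0 : ∀ y, 0 < q y) (hq1 : ∑ y, q y = 1)
    (g : EuclideanSpace ℝ (Fin d) → Y → ℝ)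
    (hgpos : ∀ θ y, 0 < g θ y)
    (hgdiff : ∀ y, Differentiable ℝ (fun θ => g θ y))
    (α : ℝ) (hα : 0 < α) (hα1 : α ≠ 1)
    (θ : EuclideanSpace ℝ (Fin d)) :
    gradient
      (fun θ' =>
        -(α - 1)⁻¹ * Real.log (∑ y, p y * Real.exp ((α - 1) * (Real.log (g θ' y) - Real.log (q y))))
          + α⁻¹ * Real.log (∑ y, q y * Real.exp (α * (Real.log (g θ' y) - Real.log (q y))))) θ
    = -(∑ y, (p y * (Real.exp ((α - 1) * (Real.log (g θ y) - Real.log (q y)))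
            / ∑ y', p y' * Real.exp ((α - 1) * (Real.log (g θ y') - Real.log (q y'))))) •
          gradient (fun θ' => Real.log (g θ' y)) θ)
      + ∑ y, (q y * (Real.exp (α * (Real.log (g θ y) - Real.log (q y)))
            / ∑ y', q y' * Real.exp (α * (Real.log (g θ y') - Real.log (q y'))))) •
          gradient (fun θ' => Real.log (g θ' y)) θ :=
  stmt_12_general d p q hp0 hp1 hq0 hq1 g hgpos hgdiff α hα hα1 θ
end
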